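/- arXiv:0801.2256 — 2 statements merged into one kernel-verified Lean document; each statement's English description precedes it below -/
import Mathlib

section
/- For integers 0 ≤ i ≤ j, p_{i-1}(x)·q_{j+1}(x) − p_i(x)·q_j(x) = (−1)^{i-1} · x^i · q_{j−i}(x). -/
open Polynomial

/-- Matching generating polynomial of the path on `k` vertices, via its recurrence. -/
noncomputable def ppoly : ℕ → Polynomial ℚ
  | 0 => 1
  | 1 => 1
  | (k+2) => ppoly (k+1) + Polynomial.X * ppoly k

/-- Extension of `ppoly` to integer indices, with `p_{-1} = 0` (and `0` below that). -/
noncomputable def pz (k : ℤ) : Polynomial ℚ := if 0 ≤ k then ppoly k.toNat else 0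


/-- Matching generating polynomial of the `k`-cycle: `q_k = p_k + x p_{k-2}` for `k ≥ 2`,
with the conventions `q_0 = 2`, `q_1 = 1`. -/
noncomputable def qq (k : ℕ) : Polynomial ℚ :=
  if k = 0 then 2 else if k = 1 then 1 else ppoly k + Polynomial.X * ppoly (k - 2)

lemma pz_nat (n : ℕ) : pz (n : ℤ) = ppoly n := by simp [pz]

lemma qq_rec (j : ℕ) : qq (j + 2) = qq (j + 1) + Polynomial.X * qq j := by
  match j with
  | 0 => simp [qq, ppoly]; ring
  | 1 => simp [qq, ppoly]
  | (k+2) =>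
    show qq (k+4) = qq (k+3) + Polynomial.X * qq (k+2)
    simp only [qq, show k+4 ≠ 0 by omega, show k+4 ≠ 1 by omega,
      show k+3 ≠ 0 by omega, show k+3 ≠ 1 by omega,
      show k+2 ≠ 0 by omega, show k+2 ≠ 1 by omega, if_false,
      show k+4-2 = k+2 from rfl, show k+3-2 = k+1 from rfl, show k+2-2 = k from rfl]
    rw [show ppoly (k+4) = ppoly (k+3) + Polynomial.X * ppoly (k+2) from rfl,
      show ppoly (k+2) = ppoly (k+1) + Polynomial.X * ppoly k from rfl]
    ring

lemma ppoly_rec' (i : ℕ) : ppoly (i + 1) = ppoly i + Polynomial.X * pz ((i : ℤ) - 1) := by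
  match i with
  | 0 => simp [ppoly, pz]
  | (k+1) =>
    rw [show ((k+1:ℕ) : ℤ) - 1 = (k : ℤ) by push_cast; ring, pz_nat]
    rfl

/-- For integers `0 ≤ i ≤ j`:
`p_{i-1} q_{j+1} − p_i q_j = (−1)^{i-1} x^i q_{j−i}`. -/
theorem ppoly_qq_shift_identity (i j : ℕ) (hij : i ≤ j) :
    pz ((i : ℤ) - 1) * qq (j + 1) - ppoly i * qq j =
      (-1) ^ (i + 1) * Polynomial.X ^ i * qq (j - i) := by
  induction i generalizing j with
  | zero => simp [pz, ppoly]
  | succ i ih =>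
    obtain ⟨j', rfl⟩ : ∃ j', j = j' + 1 := ⟨j - 1, by omega⟩
    have hij' : i ≤ j' := by omega
    have key := ih j' hij'
    rw [show ((i+1:ℕ) : ℤ) - 1 = (i : ℤ) by push_cast; ring, pz_nat,
      show j' + 1 + 1 = j' + 2 from rfl, qq_rec j', ppoly_rec' i,
      show j' + 1 - (i + 1) = j' - i by omega]
    have : ppoly i * (qq (j' + 1) + Polynomial.X * qq j')
        - (ppoly i + Polynomial.X * pz ((i:ℤ) - 1)) * qq (j' + 1)
        = -Polynomial.X * (pz ((i:ℤ) - 1) * qq (j' + 1) - ppoly i * qq j') := by ring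
    rw [this, key]
    ring
end

section
/- For every integer i ≥ 5, p_i(x) − p_2(x)·q_{i-2}(x) = −x^3 · p_{i-6}(x), where p_k is the path matching polynomial and q_k the cycle matching polynomial. -/
open Polynomial

lemma ppoly_add2 (k : ℕ) : ppoly (k+2) = ppoly (k+1) + Polynomial.X * ppoly k := rfl
lemma pp0 : ppoly 0 = 1 := rfl
lemma pp1 : ppoly 1 = 1 := rfl
lemma pp2 : ppoly 2 = ppoly 1 + Polynomial.X * ppoly 0 := rfl
lemma pp3 : ppoly 3 = ppoly 2 + Polynomial.X * ppoly 1 := rfl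
lemma pp4 : ppoly 4 = ppoly 3 + Polynomial.X * ppoly 2 := rfl
lemma pp5 : ppoly 5 = ppoly 4 + Polynomial.X * ppoly 3 := rfl
lemma pp6 : ppoly 6 = ppoly 5 + Polynomial.X * ppoly 4 := rfl
lemma pp7 : ppoly 7 = ppoly 6 + Polynomial.X * ppoly 5 := rfl

lemma key : ∀ k, ppoly (k+6) - ppoly 2 * (ppoly (k+4) + Polynomial.X * ppoly (k+2))
    = -(Polynomial.X^3 * ppoly k) := by
  intro k
  induction k using Nat.twoStepInduction with
  | zero => rw [show (0:ℕ)+6 = 6 from rfl, show (0:ℕ)+4=4 from rfl, show (0:ℕ)+2=2 from rfl,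
      pp6, pp5, pp4, pp3, pp2, pp1, pp0]; ring
  | one => rw [show (1:ℕ)+6 = 7 from rfl, show (1:ℕ)+4=5 from rfl, show (1:ℕ)+2=3 from rfl,
      pp7, pp6, pp5, pp4, pp3, pp2, pp1, pp0]; ring
  | more k ih1 ih2 =>
    have e8 : ppoly (k+2+6) = ppoly (k+1+6) + Polynomial.X * ppoly (k+6) := ppoly_add2 (k+6)
    have e6 : ppoly (k+2+4) = ppoly (k+1+4) + Polynomial.X * ppoly (k+4) := ppoly_add2 (k+4)
    have e4 : ppoly (k+2+2) = ppoly (k+1+2) + Polynomial.X * ppoly (k+2) := ppoly_add2 (k+2)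
    have e2 : ppoly (k+2) = ppoly (k+1) + Polynomial.X * ppoly k := ppoly_add2 k
    linear_combination ih2 + Polynomial.X * ih1 + e8 - ppoly 2 * e6 -
      Polynomial.X * ppoly 2 * e4 + Polynomial.X^3 * e2

/-- For every `i ≥ 5`, `p_i − p_2 q_{i-2} = −x³ p_{i-6}`. -/
theorem ppoly_sub_p2q (i : ℕ) (hi : 5 ≤ i) :
    ppoly i - ppoly 2 * qq (i - 2) = -(Polynomial.X ^ 3 * pz ((i : ℤ) - 6)) := by
  rcases eq_or_lt_of_le hi with h | h
  · subst h
    have hq : qq (5 - 2) = ppoly 3 + Polynomial.X * ppoly 1 := by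
      simp [qq]
    have hpz : pz ((↑(5:ℕ) : ℤ) - 6) = 0 := by norm_num [pz]
    rw [hq, hpz, pp5, pp4, pp3, pp2, pp1, pp0]
    ring
  · obtain ⟨k, rfl⟩ : ∃ k, i = k + 6 := ⟨i - 6, by omega⟩
    have hq : qq (k + 6 - 2) = ppoly (k+4) + Polynomial.X * ppoly (k+2) := by
      have h42 : k + 6 - 2 = k + 4 := by omega
      have h22 : k + 4 - 2 = k + 2 := by omega
      rw [h42, qq]
      simp [h22]
    have hpz : pz ((↑(k + 6) : ℤ) - 6) = ppoly k := by
      have : (↑(k + 6) : ℤ) - 6 = (k : ℤ) := by push_cast; ring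
      rw [this, pz]
      simp
    rw [hq, hpz]
    exact key k
end
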